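/- arXiv:1505.06247 — 2 statements merged into one kernel-verified Lean document; each statement's English description precedes it below -/
import Mathlib

section
/- Let l > 0, let (c_k), (d_k) be real sequences with Σ_k (|c_k|+|d_k|) < ∞, and for each k let p_k, q_k : [−l, l) → ℝ satisfy |p_k(x+t) − p_k(x)| ≤ C t² and |q_k(x+t) − q_k(x)| ≤ C t² for a uniform constant C. Define Ψ_0(x) = Σ_{k=1}^{∞} (c_k p_k(x) − d_k q_k(x)) cos(kπx/l) + (c_k q_k(x) + d_k p_k(x)) sin(kπx/l), and for S ≥ 1 define Ψ_S by replacing p_k(x), q_k(x) with their values at the midpoint of the partition interval of the uniform S-partition of [−l, l) containing x. Then sup_{x ∈ [−l,l)} |Ψ_S(x) − Ψ_0(x)| ≤ (8Cl²/S²) Σ_{k=1}^{∞} (|c_k| + |d_k|), and in particular Ψ_S → Ψ_0 uniformly on [−l, l) as S → ∞. -/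
/-!
Freezing `p_k, q_k` at the midpoint `y` of the partition cell containing `x` moves their argument
by `|y - x| ≤ l / S`, so by the quadratic modulus each of them changes by at most `C l² / S²`.
Since the `k`-th term is bilinear in `(c_k, d_k)` and `(p_k, q_k)` with bounded trigonometric
coefficients, it changes by at most `2 C l² / S² · (|c_k| + |d_k|)`, and summing over `k`
(Weierstrass M-test) gives a bound uniform in `x` which tends to `0` as `S → ∞`.
-/

open Set Real Filter

section UniformPartition

variable {l x : ℝ} {S s : ℕ}

/-- The `s`-th cell `[-l + 2ls/S, -l + 2l(s+1)/S)` of the uniform `S`-partition of `[-l, l)`. -/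
def uniformCell (l : ℝ) (S s : ℕ) : Set ℝ :=
  Ico (l * (2 * (s : ℝ) - S) / S) (l * (2 * (s : ℝ) + 2 - S) / S)

noncomputable def uniformMidpoint (l : ℝ) (S s : ℕ) : ℝ :=
  l * (2 * (s : ℝ) + 1 - S) / S

noncomputable def cellIndex (l : ℝ) (S : ℕ) (x : ℝ) : ℕ :=
  ⌊(x + l) * S / (2 * l)⌋₊

theorem mem_uniformCell_iff (hl : 0 < l) (hS : 0 < S) (hx : -l ≤ x) :
    x ∈ uniformCell l S s ↔ cellIndex l S x = s := by
  have hS' : (0 : ℝ) < S := by exact_mod_cast hS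
  have hxl : 0 ≤ x + l := by linarith
  rw [cellIndex, Nat.floor_eq_iff (by positivity), uniformCell, mem_Ico, div_le_iff₀ hS',
    lt_div_iff₀ hS', le_div_iff₀ (by positivity), div_lt_iff₀ (by positivity)]
  constructor <;> rintro ⟨h₁, h₂⟩ <;> constructor <;> linarith

theorem cellIndex_lt (hl : 0 < l) (hS : 0 < S) (hx : x ∈ Ico (-l) l) : cellIndex l S x < S := by
  have hS' : (0 : ℝ) < S := by exact_mod_cast hS
  have hxl : 0 ≤ x + l := by linarith [hx.1]
  rw [cellIndex, Nat.floor_lt (by positivity), div_lt_iff₀ (by positivity)]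
  nlinarith [hx.2]

theorem sum_indicator_uniformCell {M : Type*} [AddCommMonoid M] (hl : 0 < l) (hS : 0 < S)
    (hx : x ∈ Ico (-l) l) (g : ℕ → M) :
    ∑ s ∈ Finset.range S, (uniformCell l S s).indicator (fun _ => g s) x = g (cellIndex l S x) := by
  rw [Finset.sum_eq_single_of_mem _ (Finset.mem_range.2 (cellIndex_lt hl hS hx))]
  · exact indicator_of_mem ((mem_uniformCell_iff hl hS hx.1).2 rfl) _
  · intro s _ hs
    exact indicator_of_notMem (fun h => hs ((mem_uniformCell_iff hl hS hx.1).1 h).symm) _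

theorem uniformMidpoint_mem (hl : 0 < l) (hs : s < S) : uniformMidpoint l S s ∈ Ico (-l) l := by
  have hS' : (0 : ℝ) < S := by exact_mod_cast s.zero_le.trans_lt hs
  have hsS : (s : ℝ) + 1 ≤ S := by exact_mod_cast hs
  rw [uniformMidpoint, mem_Ico, le_div_iff₀ hS', div_lt_iff₀ hS']
  constructor <;> nlinarith [(s.cast_nonneg : (0 : ℝ) ≤ s)]

theorem abs_uniformMidpoint_sub_le (hS : 0 < S) (hx : x ∈ uniformCell l S s) :
    |uniformMidpoint l S s - x| ≤ l / S := by
  have hS' : (S : ℝ) ≠ 0 := by positivity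
  have hlow : uniformMidpoint l S s = l * (2 * (s : ℝ) - S) / S + l / S := by
    rw [uniformMidpoint]; field_simp; ring
  have hupp : uniformMidpoint l S s = l * (2 * (s : ℝ) + 2 - S) / S - l / S := by
    rw [uniformMidpoint]; field_simp; ring
  rw [abs_le]
  constructor <;> linarith [hx.1, hx.2]

end UniformPartition

section FourierTerm

/-- The real form `Re ((c + i d) (P + i Q) e^{-iθ})` of a term of the series. -/
noncomputable def fourierTerm (c d P Q θ : ℝ) : ℝ :=
  (c * P - d * Q) * cos θ + (c * Q + d * P) * sin θ

variable {c d P Q P' Q' θ δ : ℝ}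

theorem fourierTerm_sub_fourierTerm :
    fourierTerm c d P' Q' θ - fourierTerm c d P Q θ = fourierTerm c d (P' - P) (Q' - Q) θ := by
  unfold fourierTerm; ring

theorem abs_fourierTerm_le : |fourierTerm c d P Q θ| ≤ (|c| + |d|) * (|P| + |Q|) := by
  have hcos : |(c * P - d * Q) * cos θ| ≤ |c| * |P| + |d| * |Q| := by
    calc |(c * P - d * Q) * cos θ| ≤ |c * P - d * Q| := by
          rw [abs_mul]; exact mul_le_of_le_one_right (abs_nonneg _) (abs_cos_le_one θ)
      _ ≤ |c * P| + |d * Q| := abs_sub _ _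
      _ = |c| * |P| + |d| * |Q| := by rw [abs_mul, abs_mul]
  have hsin : |(c * Q + d * P) * sin θ| ≤ |c| * |Q| + |d| * |P| := by
    calc |(c * Q + d * P) * sin θ| ≤ |c * Q + d * P| := by
          rw [abs_mul]; exact mul_le_of_le_one_right (abs_nonneg _) (abs_sin_le_one θ)
      _ ≤ |c * Q| + |d * P| := abs_add_le _ _
      _ = |c| * |Q| + |d| * |P| := by rw [abs_mul, abs_mul]
  calc |fourierTerm c d P Q θ| ≤ (|c| * |P| + |d| * |Q|) + (|c| * |Q| + |d| * |P|) :=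
        (abs_add_le _ _).trans (add_le_add hcos hsin)
    _ = (|c| + |d|) * (|P| + |Q|) := by ring

theorem abs_fourierTerm_sub_le (hP : |P' - P| ≤ δ) (hQ : |Q' - Q| ≤ δ) :
    |fourierTerm c d P' Q' θ - fourierTerm c d P Q θ| ≤ (|c| + |d|) * (2 * δ) := by
  rw [fourierTerm_sub_fourierTerm]
  refine abs_fourierTerm_le.trans (mul_le_mul_of_nonneg_left ?_ (by positivity))
  linarith

end FourierTerm

theorem abs_sub_le_mul_sq_of_abs_add_sub_le {f : ℝ → ℝ} {I : Set ℝ} {C δ x y : ℝ} (hC : 0 ≤ C)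
    (hf : ∀ x t : ℝ, x ∈ I → x + t ∈ I → |f (x + t) - f x| ≤ C * t ^ 2)
    (hx : x ∈ I) (hy : y ∈ I) (hxy : |y - x| ≤ δ) : |f y - f x| ≤ C * δ ^ 2 := by
  have h := hf x (y - x) hx (by rwa [add_sub_cancel])
  rw [add_sub_cancel] at h
  refine h.trans (mul_le_mul_of_nonneg_left ?_ hC)
  rw [← sq_abs]
  exact pow_le_pow_left₀ (abs_nonneg _) hxy 2

theorem abs_tsum_sub_tsum_le {ι : Type*} {f g a : ι → ℝ} (hf : Summable f) (hg : Summable g)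
    (ha : Summable a) (h : ∀ i, |f i - g i| ≤ a i) :
    |∑' i, f i - ∑' i, g i| ≤ ∑' i, a i := by
  rw [← hf.tsum_sub hg]
  exact tsum_of_norm_bounded (f := fun i => f i - g i) ha.hasSum h

theorem tendstoUniformlyOn_of_dist_le_of_tendsto_zero {ι α β : Type*} [PseudoMetricSpace β]
    {L : Filter ι} {F : ι → α → β} {f : α → β} {s : Set α} {b : ι → ℝ}
    (hb : Tendsto b L (nhds 0)) (h : ∀ᶠ n in L, ∀ x ∈ s, dist (f x) (F n x) ≤ b n) :
    TendstoUniformlyOn F f L s := by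
  rw [Metric.tendstoUniformlyOn_iff]
  intro ε hε
  filter_upwards [h, hb.eventually (gt_mem_nhds hε)] with n hn hbn x hx
  exact (hn x hx).trans_lt hbn

theorem stmt8 (l : ℝ) (hl : 0 < l) (C : ℝ) (hC : 0 < C)
    (c d : ℕ → ℝ)
    (hsum : Summable fun k : ℕ => |c (k + 1)| + |d (k + 1)|)
    (p q : ℕ → ℝ → ℝ)
    (hp : ∀ k, 1 ≤ k → ∀ x t : ℝ, x ∈ Ico (-l) l → x + t ∈ Ico (-l) l →
      |p k (x + t) - p k x| ≤ C * t ^ 2)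
    (hq : ∀ k, 1 ≤ k → ∀ x t : ℝ, x ∈ Ico (-l) l → x + t ∈ Ico (-l) l →
      |q k (x + t) - q k x| ≤ C * t ^ 2)
    (F : ℝ → ℝ → ℝ)
    (hF : ∀ y x, F y x = ∑' k : ℕ,
      ((c (k + 1) * p (k + 1) y - d (k + 1) * q (k + 1) y) * cos ((k + 1 : ℕ) * π * x / l) +
       (c (k + 1) * q (k + 1) y + d (k + 1) * p (k + 1) y) * sin ((k + 1 : ℕ) * π * x / l)))
    (hFsum : ∀ y x : ℝ, Summable fun k : ℕ =>
      ((c (k + 1) * p (k + 1) y - d (k + 1) * q (k + 1) y) * cos ((k + 1 : ℕ) * π * x / l) +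
       (c (k + 1) * q (k + 1) y + d (k + 1) * p (k + 1) y) * sin ((k + 1 : ℕ) * π * x / l)))
    (Ψ₀ : ℝ → ℝ) (hΨ₀ : ∀ x, Ψ₀ x = F x x)
    (Ψ : ℕ → ℝ → ℝ)
    (hΨ : ∀ S x, Ψ S x = ∑ s ∈ Finset.range S,
      Set.indicator (Ico (l * (2 * (s : ℝ) - S) / S) (l * (2 * (s : ℝ) + 2 - S) / S))
        (fun _ => F (l * (2 * (s : ℝ) + 1 - S) / S) x) x) :
    (∀ S : ℕ, 1 ≤ S → ∀ x ∈ Ico (-l) l,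
      |Ψ S x - Ψ₀ x| ≤ (8 * C * l ^ 2 / S ^ 2) * ∑' k : ℕ, (|c (k + 1)| + |d (k + 1)|)) ∧
    TendstoUniformlyOn Ψ Ψ₀ atTop (Ico (-l) l) := by
  set M := ∑' k : ℕ, (|c (k + 1)| + |d (k + 1)|)
  have key : ∀ S : ℕ, 1 ≤ S → ∀ x ∈ Ico (-l) l, |Ψ S x - Ψ₀ x| ≤ 2 * C * l ^ 2 * M / S ^ 2 := by
    intro S hS x hx
    set y := uniformMidpoint l S (cellIndex l S x)
    have hy : y ∈ Ico (-l) l := uniformMidpoint_mem hl (cellIndex_lt hl hS hx)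
    have hyx : |y - x| ≤ l / S :=
      abs_uniformMidpoint_sub_le hS ((mem_uniformCell_iff hl hS hx.1).2 rfl)
    have hΨx : Ψ S x = F y x := (hΨ S x).trans (sum_indicator_uniformCell hl hS hx _)
    have hterm : ∀ k : ℕ,
        |fourierTerm (c (k + 1)) (d (k + 1)) (p (k + 1) y) (q (k + 1) y) ((k + 1 : ℕ) * π * x / l) -
          fourierTerm (c (k + 1)) (d (k + 1)) (p (k + 1) x) (q (k + 1) x) ((k + 1 : ℕ) * π * x / l)|
          ≤ (|c (k + 1)| + |d (k + 1)|) * (2 * (C * (l / S) ^ 2)) := fun k =>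
      abs_fourierTerm_sub_le
        (abs_sub_le_mul_sq_of_abs_add_sub_le hC.le (hp (k + 1) k.succ_pos) hx hy hyx)
        (abs_sub_le_mul_sq_of_abs_add_sub_le hC.le (hq (k + 1) k.succ_pos) hx hy hyx)
    rw [hΨx, hΨ₀, hF, hF]
    calc _ ≤ ∑' k : ℕ, (|c (k + 1)| + |d (k + 1)|) * (2 * (C * (l / S) ^ 2)) :=
          abs_tsum_sub_tsum_le (hFsum y x) (hFsum x x) (hsum.mul_right _) hterm
      _ = 2 * C * l ^ 2 * M / S ^ 2 := by rw [tsum_mul_right, div_pow]; ring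
  refine ⟨fun S hS x hx => (key S hS x hx).trans ?_, ?_⟩
  · have hM : 0 ≤ M := tsum_nonneg fun k => by positivity
    have h : 0 ≤ C * l ^ 2 * M / S ^ 2 := by positivity
    calc 2 * C * l ^ 2 * M / S ^ 2 = 2 * (C * l ^ 2 * M / S ^ 2) := by ring
      _ ≤ 8 * (C * l ^ 2 * M / S ^ 2) := by linarith
      _ = 8 * C * l ^ 2 / S ^ 2 * M := by ring
  · refine tendstoUniformlyOn_of_dist_le_of_tendsto_zero
      (tendsto_const_div_pow (2 * C * l ^ 2 * M) 2 two_ne_zero) ?_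
    filter_upwards [eventually_ge_atTop 1] with S hS x hx
    rw [dist_comm, Real.dist_eq]
    exact key S hS x hx
end

section
/- Let m ≥ 1, l > 0, and suppose A_0, ..., A_{2m} : [−l, l) → ℝ are simple step functions adapted to a common partition −l = a_0 < a_1 < ... < a_s = l (each A_n is constant on each [a_{j−1}, a_j)). Assume A_0 is nowhere zero and σ_k(x)² + ω_k(x)² ≠ 0 for all x ∈ [−l, l) and k ≥ 1, where σ_k(x) = Σ_{n=0}^{m} (-1)^n A_{2n}(x) (kπ/l)^{2n} and ω_k(x) = Σ_{n=0}^{m−1} (-1)^n A_{2n+1}(x) (kπ/l)^{2n+1}. Let f(x) = c_0/2 + Σ_{k=1}^{K} (c_k cos(kπx/l) + d_k sin(kπx/l)) be a trigonometric polynomial. Then the function Ψ_0(x) = c_0/(2A_0(x)) + Σ_{k=1}^{K} ((c_k σ_k(x) − d_k ω_k(x))/(σ_k(x)² + ω_k(x)²)) cos(kπx/l) + ((c_k ω_k(x) + d_k σ_k(x))/(σ_k(x)² + ω_k(x)²)) sin(kπx/l) satisfies Σ_{n=0}^{2m} A_n(x) Ψ_0^{(n)}(x) = f(x) at every x ∈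 (−l, l) \ {a_1, ..., a_{s−1}}, where Ψ_0^{(n)} denotes the n-th derivative taken on the open interval (a_{j−1}, a_j) containing x. -/
open Real Finset Set Topology

/-!
On the open partition interval containing `x` every `A n` is constant, so near `x` the function
`Ψ` coincides with the trigonometric polynomial obtained by freezing the coefficients at `x`.
Differentiating `α cos (θ y) + β sin (θ y)` maps `(α, β)` to `(θ β, -θ α)`; hence the constant
coefficient operator `∑ A n Dⁿ` sends it to `(σ α + ω β) cos (θ y) + (σ β - ω α) sin (θ y)`,
and the coefficients of `Ψ` are exactly the solution of this `2 × 2` system with right-hand side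
`(c k, d k)`. The constant term is handled by `A 0` alone.
-/

lemma exists_mem_Ico_of_le_of_lt {α : Type*} [LinearOrder α] (a : ℕ → α) {x : α} {s : ℕ}
    (h0 : a 0 ≤ x) (hs : x < a s) : ∃ j < s, x ∈ Ico (a j) (a (j + 1)) := by
  induction s with
  | zero => exact absurd hs h0.not_gt
  | succ s ih =>
    by_cases hxs : x < a s
    · obtain ⟨j, hj, hx⟩ := ih hxs
      exact ⟨j, by omega, hx⟩
    · exact ⟨s, s.lt_succ_self, not_lt.1 hxs, hs⟩

lemma exists_mem_Ioo_of_forall_ne {α : Type*} [LinearOrder α] (a : ℕ → α) {x : α} {s : ℕ}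
    (h0 : a 0 < x) (hs : x < a s) (hne : ∀ j, 1 ≤ j → j ≤ s - 1 → x ≠ a j) :
    ∃ j < s, x ∈ Ioo (a j) (a (j + 1)) := by
  obtain ⟨j, hj, hxj, hxj'⟩ := exists_mem_Ico_of_le_of_lt a h0.le hs
  refine ⟨j, hj, hxj.lt_of_ne ?_, hxj'⟩
  rcases j with _ | j
  · exact h0.ne
  · exact (hne (j + 1) (by omega) (by omega)).symm

lemma sum_range_two_mul_add_one {M : Type*} [AddCommMonoid M] (m : ℕ) (F : ℕ → M) :
    ∑ n ∈ range (2 * m + 1), F n =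
      ∑ p ∈ range (m + 1), F (2 * p) + ∑ p ∈ range m, F (2 * p + 1) := by
  induction m with
  | zero => simp
  | succ m ih =>
    rw [sum_range_succ (fun p => F (2 * p)) (m + 1), sum_range_succ (fun p => F (2 * p + 1)) m,
      Nat.mul_succ, sum_range_succ, sum_range_succ, ih]
    abel

noncomputable def trigTerm (θ α β y : ℝ) : ℝ := α * cos (θ * y) + β * sin (θ * y)

lemma contDiff_trigTerm (θ α β : ℝ) {n : WithTop ℕ∞} : ContDiff ℝ n (trigTerm θ α β) := by
  unfold trigTerm
  fun_prop

lemma deriv_trigTerm (θ α β : ℝ) :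
    deriv (trigTerm θ α β) = trigTerm θ (θ * β) (-(θ * α)) := by
  funext y
  have hθ : HasDerivAt (fun y => θ * y) θ y := by simpa using (hasDerivAt_id y).const_mul θ
  refine ((hθ.cos.const_mul α).add (hθ.sin.const_mul β)).deriv.trans ?_
  simp only [trigTerm]
  ring

lemma iteratedDeriv_two_mul_trigTerm (θ α β : ℝ) (p : ℕ) :
    iteratedDeriv (2 * p) (trigTerm θ α β) =
      trigTerm θ ((-1) ^ p * θ ^ (2 * p) * α) ((-1) ^ p * θ ^ (2 * p) * β) := by
  induction p generalizing α β with
  | zero => simp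
  | succ p ih =>
    rw [show 2 * (p + 1) = 2 * p + 1 + 1 by ring, iteratedDeriv_succ', iteratedDeriv_succ',
      deriv_trigTerm, deriv_trigTerm, ih]
    congr 1 <;> ring

lemma iteratedDeriv_two_mul_add_one_trigTerm (θ α β : ℝ) (p : ℕ) :
    iteratedDeriv (2 * p + 1) (trigTerm θ α β) =
      trigTerm θ ((-1) ^ p * θ ^ (2 * p + 1) * β) (-((-1) ^ p * θ ^ (2 * p + 1) * α)) := by
  rw [iteratedDeriv_succ', deriv_trigTerm, iteratedDeriv_two_mul_trigTerm]
  congr 1 <;> ring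

lemma sum_mul_iteratedDeriv_trigTerm (b : ℕ → ℝ) (m : ℕ) (θ α β y σ ω : ℝ)
    (hσ : σ = ∑ p ∈ range (m + 1), (-1) ^ p * b (2 * p) * θ ^ (2 * p))
    (hω : ω = ∑ p ∈ range m, (-1) ^ p * b (2 * p + 1) * θ ^ (2 * p + 1)) :
    ∑ n ∈ range (2 * m + 1), b n * iteratedDeriv n (trigTerm θ α β) y =
      trigTerm θ (σ * α + ω * β) (σ * β - ω * α) y := by
  have hsplit : trigTerm θ (σ * α + ω * β) (σ * β - ω * α) y =
      σ * trigTerm θ α β y + ω * trigTerm θ β (-α) y := by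
    simp only [trigTerm]
    ring
  rw [hsplit, hσ, hω, sum_range_two_mul_add_one, sum_mul, sum_mul]
  congr 1 <;> refine sum_congr rfl fun p _ => ?_
  · rw [iteratedDeriv_two_mul_trigTerm]
    simp only [trigTerm]
    ring
  · rw [iteratedDeriv_two_mul_add_one_trigTerm]
    simp only [trigTerm]
    ring

lemma sum_mul_iteratedDeriv_const_add_sum_trigTerm (b : ℕ → ℝ) (m : ℕ) (C : ℝ) (I : Finset ℕ)
    (θ α β : ℕ → ℝ) (y : ℝ) :
    ∑ n ∈ range (2 * m + 1),
        b n * iteratedDeriv n (fun z => C + ∑ k ∈ I, trigTerm (θ k) (α k) (β k) z) y =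
      b 0 * C + ∑ k ∈ I, ∑ n ∈ range (2 * m + 1),
        b n * iteratedDeriv n (trigTerm (θ k) (α k) (β k)) y := by
  have hderiv : ∀ n, iteratedDeriv n (fun z => C + ∑ k ∈ I, trigTerm (θ k) (α k) (β k) z) y =
      (if n = 0 then C else 0) + ∑ k ∈ I, iteratedDeriv n (trigTerm (θ k) (α k) (β k)) y := by
    intro n
    rcases n.eq_zero_or_pos with rfl | hn
    · simp
    · rw [iteratedDeriv_const_add hn,
        iteratedDeriv_fun_sum fun k _ => (contDiff_trigTerm _ _ _).contDiffAt, if_neg hn.ne',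
        zero_add]
  simp only [hderiv, mul_add, mul_sum, sum_add_distrib, mul_ite, mul_zero,
    sum_ite_eq' (range (2 * m + 1)) 0, Finset.mem_range, Nat.zero_lt_succ, if_true]
  rw [sum_comm]

theorem stmt9_general (m : ℕ) (l : ℝ)
    (A : ℕ → ℝ → ℝ)
    (s : ℕ) (a : ℕ → ℝ)
    (ha0 : a 0 = -l) (has : a s = l)
    (hstep : ∀ n, n ≤ 2 * m → ∀ j, j < s →
      ∀ x ∈ Ico (a j) (a (j + 1)), ∀ y ∈ Ico (a j) (a (j + 1)), A n x = A n y)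
    (hA0 : ∀ x ∈ Ico (-l) l, A 0 x ≠ 0)
    (σ ω : ℕ → ℝ → ℝ)
    (hσ : ∀ k x, σ k x =
      ∑ n ∈ range (m + 1), (-1 : ℝ) ^ n * A (2 * n) x * (k * π / l) ^ (2 * n))
    (hω : ∀ k x, ω k x =
      ∑ n ∈ range m, (-1 : ℝ) ^ n * A (2 * n + 1) x * (k * π / l) ^ (2 * n + 1))
    (hne : ∀ k, 1 ≤ k → ∀ x ∈ Ico (-l) l, σ k x ^ 2 + ω k x ^ 2 ≠ 0)
    (K : ℕ) (c d : ℕ → ℝ)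
    (f Ψ : ℝ → ℝ)
    (hf : ∀ x, f x = c 0 / 2 + ∑ k ∈ Icc 1 K,
      (c k * cos (k * π * x / l) + d k * sin (k * π * x / l)))
    (hΨ : ∀ x, Ψ x = c 0 / (2 * A 0 x) + ∑ k ∈ Icc 1 K,
      ((c k * σ k x - d k * ω k x) / (σ k x ^ 2 + ω k x ^ 2) * cos (k * π * x / l) +
       (c k * ω k x + d k * σ k x) / (σ k x ^ 2 + ω k x ^ 2) * sin (k * π * x / l))) :
    ∀ x ∈ Ioo (-l) l, (∀ j, 1 ≤ j → j ≤ s - 1 → x ≠ a j) →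
      ∑ n ∈ range (2 * m + 1), A n x * iteratedDeriv n Ψ x = f x := by
  intro x hx hxa
  have hxIco : x ∈ Ico (-l) l := Ioo_subset_Ico_self hx
  obtain ⟨j, hj, hxj⟩ := exists_mem_Ioo_of_forall_ne a (ha0 ▸ hx.1) (has ▸ hx.2) hxa
  have hAconst : ∀ᶠ y in 𝓝 x, ∀ n ≤ 2 * m, A n y = A n x := by
    filter_upwards [Ioo_mem_nhds hxj.1 hxj.2] with y hy n hn
    exact hstep n hn j hj y (Ioo_subset_Ico_self hy) x (Ioo_subset_Ico_self hxj)
  have harg : ∀ (k : ℕ) (y : ℝ), k * π * y / l = k * π / l * y :=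
    fun _ _ => mul_div_right_comm ..
  have hΨloc : Ψ =ᶠ[𝓝 x] fun y => c 0 / (2 * A 0 x) + ∑ k ∈ Icc 1 K, trigTerm (k * π / l)
      ((c k * σ k x - d k * ω k x) / (σ k x ^ 2 + ω k x ^ 2))
      ((c k * ω k x + d k * σ k x) / (σ k x ^ 2 + ω k x ^ 2)) y := by
    filter_upwards [hAconst] with y hy
    have hσy (k : ℕ) : σ k y = σ k x := by
      rw [hσ, hσ]
      exact sum_congr rfl fun n hn => by rw [hy (2 * n) (by rw [Finset.mem_range] at hn; omega)]
    have hωy (k : ℕ) : ω k y = ω k x := by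
      rw [hω, hω]
      exact sum_congr rfl fun n hn => by rw [hy (2 * n + 1) (by rw [Finset.mem_range] at hn; omega)]
    simp only [hΨ, hσy, hωy, hy 0 (Nat.zero_le _), trigTerm, harg]
  simp only [hΨloc.iteratedDeriv_eq]
  rw [sum_mul_iteratedDeriv_const_add_sum_trigTerm, hf]
  congr 1
  · field_simp [hA0 x hxIco]
  · refine sum_congr rfl fun k hk => ?_
    have hS := hne k (mem_Icc.1 hk).1 x hxIco
    rw [sum_mul_iteratedDeriv_trigTerm _ m _ _ _ x _ _ (hσ k x) (hω k x), trigTerm, harg]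
    congr 2 <;> field_simp <;> ring

theorem stmt9 (m : ℕ) (hm : 1 ≤ m) (l : ℝ) (hl : 0 < l)
    (A : ℕ → ℝ → ℝ)
    (s : ℕ) (hs : 1 ≤ s) (a : ℕ → ℝ)
    (ha0 : a 0 = -l) (has : a s = l)
    (hmono : ∀ j, j < s → a j < a (j + 1))
    (hstep : ∀ n, n ≤ 2 * m → ∀ j, j < s →
      ∀ x ∈ Ico (a j) (a (j + 1)), ∀ y ∈ Ico (a j) (a (j + 1)), A n x = A n y)
    (hA0 : ∀ x ∈ Ico (-l) l, A 0 x ≠ 0)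
    (σ ω : ℕ → ℝ → ℝ)
    (hσ : ∀ k x, σ k x =
      ∑ n ∈ range (m + 1), (-1 : ℝ) ^ n * A (2 * n) x * (k * π / l) ^ (2 * n))
    (hω : ∀ k x, ω k x =
      ∑ n ∈ range m, (-1 : ℝ) ^ n * A (2 * n + 1) x * (k * π / l) ^ (2 * n + 1))
    (hne : ∀ k, 1 ≤ k → ∀ x ∈ Ico (-l) l, σ k x ^ 2 + ω k x ^ 2 ≠ 0)
    (K : ℕ) (c d : ℕ → ℝ)
    (f Ψ : ℝ → ℝ)
    (hf : ∀ x, f x = c 0 / 2 + ∑ k ∈ Icc 1 K,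
      (c k * cos (k * π * x / l) + d k * sin (k * π * x / l)))
    (hΨ : ∀ x, Ψ x = c 0 / (2 * A 0 x) + ∑ k ∈ Icc 1 K,
      ((c k * σ k x - d k * ω k x) / (σ k x ^ 2 + ω k x ^ 2) * cos (k * π * x / l) +
       (c k * ω k x + d k * σ k x) / (σ k x ^ 2 + ω k x ^ 2) * sin (k * π * x / l))) :
    ∀ x ∈ Ioo (-l) l, (∀ j, 1 ≤ j → j ≤ s - 1 → x ≠ a j) →
      ∑ n ∈ range (2 * m + 1), A n x * iteratedDeriv n Ψ x = f x :=
  stmt9_general m l A s a ha0 has hstep hA0 σ ω hσ hω hne K c d f Ψ hf hΨ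
end
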